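/- Let S be a symmetric real n×n matrix with strictly positive diagonal entries and let λ > u_λ, where u_λ = max_{i≠j} |Sᵢⱼ|. Then the diagonal matrix with diagonal entries 1/Sᵢᵢ is the unique minimizer of the graphical lasso objective f over the set of positive definite symmetric real n×n matrices; in particular every minimizer has all off-diagonal entries equal to zero, i.e. the estimated graph is empty. -/

import Mathlib

/-! By Hadamard's inequality `log det Θ ≤ ∑ᵢ log Θᵢᵢ`, and since `|Sᵢⱼ| ≤ u` off the diagonal,
`f(Θ) ≥ ∑ᵢ (Sᵢᵢ Θᵢᵢ − log Θᵢᵢ) + (λ − u) ∑_{i≠j} |Θᵢⱼ|`. Each summand `a x − log x` is at least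
`1 + log a`, with equality only at `x = 1/a`, so `f(Θ) ≥ ∑ᵢ (1 + log Sᵢᵢ) = f(diag(1/Sᵢᵢ))`, and
for `λ > u` equality forces `Θ` to be diagonal with entries `1/Sᵢᵢ`. -/

open Matrix

/-- The graphical lasso objective:
`f(Θ) = trace(S·Θ) − log det Θ + λ·∑_{i≠j} |Θᵢⱼ|`. -/
noncomputable def glassoObj {n : ℕ} (S : Matrix (Fin n) (Fin n) ℝ) (lam : ℝ)
    (Θ : Matrix (Fin n) (Fin n) ℝ) : ℝ :=
  (S * Θ).trace - Real.log Θ.det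
    + lam * ∑ i, ∑ j, if i ≠ j then |Θ i j| else 0

open Real

namespace Matrix

variable {ι : Type*} [Fintype ι] [DecidableEq ι]

def offDiagL1 (Θ : Matrix ι ι ℝ) : ℝ := ∑ i, ∑ j, if i ≠ j then |Θ i j| else 0

theorem offDiagL1_nonneg (Θ : Matrix ι ι ℝ) : 0 ≤ Θ.offDiagL1 :=
  Finset.sum_nonneg fun _ _ => Finset.sum_nonneg fun _ _ => by positivity

theorem offDiagL1_eq_zero_iff {Θ : Matrix ι ι ℝ} : Θ.offDiagL1 = 0 ↔ Θ.IsDiag := by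
  have hterm : ∀ i j, 0 ≤ if i ≠ j then |Θ i j| else 0 := fun _ _ => by positivity
  rw [offDiagL1, Finset.sum_eq_zero_iff_of_nonneg fun i _ => Finset.sum_nonneg fun j _ => hterm i j]
  simp_rw [Finset.sum_eq_zero_iff_of_nonneg fun j _ => hterm _ j]
  simp [IsDiag, Pairwise]

theorem PosDef.log_det_le_trace_sub_card {M : Matrix ι ι ℝ} (hM : M.PosDef) :
    log M.det ≤ M.trace - Fintype.card ι := by
  have hev := hM.eigenvalues_pos
  rw [hM.isHermitian.det_eq_prod_eigenvalues, hM.isHermitian.trace_eq_sum_eigenvalues]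
  simp only [RCLike.ofReal_real_eq_id, id]
  rw [log_prod fun i _ => (hev i).ne']
  calc ∑ i, log (hM.isHermitian.eigenvalues i)
      ≤ ∑ i, (hM.isHermitian.eigenvalues i - 1) :=
        Finset.sum_le_sum fun i _ => log_le_sub_one_of_pos (hev i)
    _ = _ := by simp [Finset.sum_sub_distrib]

theorem PosDef.det_le_prod_diag {Θ : Matrix ι ι ℝ} (hΘ : Θ.PosDef) : Θ.det ≤ ∏ i, Θ i i := by
  -- after rescaling `Θ` to unit diagonal, `log det ≤ trace - card` reads `det ≤ 1`
  set s : ι → ℝ := fun i => (√(Θ i i))⁻¹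
  have hs : ∀ i, s i * s i = (Θ i i)⁻¹ := fun i => by
    simp only [s, ← mul_inv, mul_self_sqrt hΘ.diag_pos.le]
  have hs0 : ∀ i, s i ≠ 0 := fun i => inv_ne_zero (Real.sqrt_ne_zero'.2 hΘ.diag_pos)
  have hM : (diagonal s * Θ * diagonal s).PosDef := by
    simpa using hΘ.conjTranspose_mul_mul_same (B := diagonal s) (mulVec_injective_of_isUnit
      (isUnit_diagonal.2 (Pi.isUnit_iff.2 fun i => isUnit_iff_ne_zero.2 (hs0 i))))
  have htr : (diagonal s * Θ * diagonal s).trace = Fintype.card ι := by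
    simp [trace, mul_diagonal, diagonal_mul, mul_right_comm _ _ (s _), hs, hΘ.diag_pos.ne']
  have hdet : (diagonal s * Θ * diagonal s).det = Θ.det / ∏ i, Θ i i := by
    rw [det_mul, det_mul, det_diagonal, mul_right_comm, ← Finset.prod_mul_distrib]
    simp only [hs, Finset.prod_inv_distrib]
    ring
  have hlog := hM.log_det_le_trace_sub_card
  rw [htr, sub_self, log_nonpos_iff hM.det_pos.le, hdet] at hlog
  rwa [div_le_one₀ (Finset.prod_pos fun i _ => hΘ.diag_pos)] at hlog

theorem trace_mul_ge_sub_offDiagL1 {S Θ : Matrix ι ι ℝ} {u : ℝ}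
    (hS : ∀ i j, i ≠ j → |S i j| ≤ u) :
    ∑ i, S i i * Θ i i - u * Θ.offDiagL1 ≤ (S * Θ).trace := by
  calc ∑ i, S i i * Θ i i - u * Θ.offDiagL1
      = ∑ i, ∑ j, ((if i = j then Θ i j * S j i else 0)
          - u * if i ≠ j then |Θ i j| else 0) := by
        simp [offDiagL1, Finset.mul_sum, Finset.sum_sub_distrib, mul_comm]
    _ ≤ ∑ i, ∑ j, Θ i j * S j i := by
        refine Finset.sum_le_sum fun i _ => Finset.sum_le_sum fun j _ => ?_
        by_cases h : i = j
        · simp [h]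
        · simp only [h, if_false, ne_eq, not_false_eq_true, if_true, zero_sub]
          calc -(u * |Θ i j|) ≤ -|Θ i j * S j i| := by
                rw [abs_mul, mul_comm]
                exact neg_le_neg (mul_le_mul_of_nonneg_left (hS j i (Ne.symm h)) (abs_nonneg _))
            _ ≤ Θ i j * S j i := neg_abs_le _
    _ = (S * Θ).trace := by
        rw [trace_mul_comm]; simp [trace, mul_apply]

end Matrix

theorem one_add_log_le_mul_sub_log {a x : ℝ} (ha : 0 < a) (hx : 0 < x) :
    1 + log a ≤ a * x - log x := by
  have h := log_le_sub_one_of_pos (mul_pos ha hx)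
  rw [log_mul ha.ne' hx.ne'] at h
  linarith

theorem eq_one_div_of_mul_sub_log_le {a x : ℝ} (ha : 0 < a) (hx : 0 < x)
    (h : a * x - log x ≤ 1 + log a) : x = 1 / a := by
  by_contra hne
  have hax : a * x ≠ 1 := fun hax => hne (by rw [eq_div_iff ha.ne', mul_comm, hax])
  have h' := log_lt_sub_one_of_pos (mul_pos ha hx) hax
  rw [log_mul ha.ne' hx.ne'] at h'
  linarith

theorem eq_one_div_of_sum_mul_sub_log_le {ι : Type*} [Fintype ι] {a x : ι → ℝ}
    (ha : ∀ i, 0 < a i) (hx : ∀ i, 0 < x i)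
    (h : ∑ i, (a i * x i - log (x i)) ≤ ∑ i, (1 + log (a i))) : x = fun i => 1 / a i := by
  have hle : ∀ i ∈ Finset.univ, 1 + log (a i) ≤ a i * x i - log (x i) :=
    fun i _ => one_add_log_le_mul_sub_log (ha i) (hx i)
  have heq := (Finset.sum_eq_sum_iff_of_le hle).1 (le_antisymm (Finset.sum_le_sum hle) h)
  funext i
  exact eq_one_div_of_mul_sub_log_le (ha i) (hx i) (heq i (Finset.mem_univ i)).ge

section Glasso

variable {n : ℕ} {S Θ : Matrix (Fin n) (Fin n) ℝ} {lam u : ℝ}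

theorem glassoObj_def (S : Matrix (Fin n) (Fin n) ℝ) (lam : ℝ) (Θ : Matrix (Fin n) (Fin n) ℝ) :
    glassoObj S lam Θ = (S * Θ).trace - log Θ.det + lam * Θ.offDiagL1 :=
  rfl

theorem glassoObj_diagonal (S : Matrix (Fin n) (Fin n) ℝ) (lam : ℝ) {v : Fin n → ℝ}
    (hv : ∀ i, v i ≠ 0) :
    glassoObj S lam (diagonal v) = ∑ i, (S i i * v i - log (v i)) := by
  rw [glassoObj_def, offDiagL1_eq_zero_iff.2 (isDiag_diagonal v), det_diagonal,
    log_prod fun i _ => hv i, Finset.sum_sub_distrib]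
  simp [trace, mul_diagonal]

theorem glassoObj_diagonal_one_div (lam : ℝ) (hSdiag : ∀ i, 0 < S i i) :
    glassoObj S lam (diagonal fun i => 1 / S i i) = ∑ i, (1 + log (S i i)) := by
  rw [glassoObj_diagonal S lam fun i => (one_div_pos.2 (hSdiag i)).ne']
  refine Finset.sum_congr rfl fun i _ => ?_
  rw [mul_one_div_cancel (hSdiag i).ne', one_div, log_inv, sub_neg_eq_add]

theorem sum_mul_sub_log_add_le_glassoObj (hS : ∀ i j, i ≠ j → |S i j| ≤ u) (hΘ : Θ.PosDef) :
    ∑ i, (S i i * Θ i i - log (Θ i i)) + (lam - u) * Θ.offDiagL1 ≤ glassoObj S lam Θ := by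
  have hdet : log Θ.det ≤ ∑ i, log (Θ i i) := by
    rw [← log_prod fun i _ => hΘ.diag_pos.ne']
    exact log_le_log hΘ.det_pos hΘ.det_le_prod_diag
  have htrace := trace_mul_ge_sub_offDiagL1 (Θ := Θ) hS
  rw [glassoObj_def, Finset.sum_sub_distrib]
  linarith

theorem glassoObj_diagonal_one_div_le (hSdiag : ∀ i, 0 < S i i)
    (hS : ∀ i j, i ≠ j → |S i j| ≤ u) (hlam : u ≤ lam) (hΘ : Θ.PosDef) :
    glassoObj S lam (diagonal fun i => 1 / S i i) ≤ glassoObj S lam Θ := by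
  have hbound := sum_mul_sub_log_add_le_glassoObj (lam := lam) hS hΘ
  have hdiag := Finset.sum_le_sum fun i (_ : i ∈ Finset.univ) =>
    one_add_log_le_mul_sub_log (hSdiag i) (hΘ.diag_pos (i := i))
  have hP := mul_nonneg (sub_nonneg.2 hlam) Θ.offDiagL1_nonneg
  rw [glassoObj_diagonal_one_div lam hSdiag]
  linarith

theorem eq_diagonal_one_div_of_glassoObj_le (hSdiag : ∀ i, 0 < S i i)
    (hS : ∀ i j, i ≠ j → |S i j| ≤ u) (hlam : u < lam) (hΘ : Θ.PosDef)
    (hle : glassoObj S lam Θ ≤ glassoObj S lam (diagonal fun i => 1 / S i i)) :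
    Θ = diagonal fun i => 1 / S i i := by
  rw [glassoObj_diagonal_one_div lam hSdiag] at hle
  have hbound := sum_mul_sub_log_add_le_glassoObj (lam := lam) hS hΘ
  have hdiag := Finset.sum_le_sum fun i (_ : i ∈ Finset.univ) =>
    one_add_log_le_mul_sub_log (hSdiag i) (hΘ.diag_pos (i := i))
  have hP0 : Θ.offDiagL1 = 0 :=
    le_antisymm (nonpos_of_mul_nonpos_right (by linarith) (sub_pos.2 hlam)) Θ.offDiagL1_nonneg
  rw [hP0, mul_zero, add_zero] at hbound
  have hdiag_eq : Θ.diag = fun i => 1 / S i i :=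
    eq_one_div_of_sum_mul_sub_log_le hSdiag (fun i => hΘ.diag_pos) (hbound.trans hle)
  rw [← (offDiagL1_eq_zero_iff.1 hP0).diagonal_diag, hdiag_eq]

end Glasso

theorem glasso_empty_graph_general {n : ℕ}
    (S : Matrix (Fin n) (Fin n) ℝ)
    (hSdiag : ∀ i, 0 < S i i) (lam ulam : ℝ)
    (hulam : IsGreatest {x : ℝ | ∃ i j : Fin n, i ≠ j ∧ x = |S i j|} ulam)
    (hlam : ulam < lam) :
    (Matrix.diagonal fun i => 1 / S i i).PosDef ∧
    IsMinOn (glassoObj S lam) {Θ : Matrix (Fin n) (Fin n) ℝ | Θ.PosDef}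
      (Matrix.diagonal fun i => 1 / S i i) ∧
    (∀ Θ : Matrix (Fin n) (Fin n) ℝ, Θ.PosDef →
      IsMinOn (glassoObj S lam) {Θ' : Matrix (Fin n) (Fin n) ℝ | Θ'.PosDef} Θ →
      Θ = Matrix.diagonal fun i => 1 / S i i) ∧
    (∀ Θ : Matrix (Fin n) (Fin n) ℝ, Θ.PosDef →
      IsMinOn (glassoObj S lam) {Θ' : Matrix (Fin n) (Fin n) ℝ | Θ'.PosDef} Θ →
      ∀ i j, i ≠ j → Θ i j = 0) := by
  have hS : ∀ i j, i ≠ j → |S i j| ≤ ulam := fun i j h => hulam.2 ⟨i, j, h, rfl⟩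
  have hD : (diagonal fun i => 1 / S i i).PosDef :=
    PosDef.diagonal fun i => one_div_pos.2 (hSdiag i)
  have hunique : ∀ Θ : Matrix (Fin n) (Fin n) ℝ, Θ.PosDef →
      IsMinOn (glassoObj S lam) {Θ' | Θ'.PosDef} Θ → Θ = diagonal fun i => 1 / S i i :=
    fun Θ hΘ hΘmin =>
      eq_diagonal_one_div_of_glassoObj_le hSdiag hS hlam hΘ (isMinOn_iff.1 hΘmin _ hD)
  refine ⟨hD, isMinOn_iff.2 fun Θ hΘ =>
      glassoObj_diagonal_one_div_le hSdiag hS hlam.le hΘ, hunique, ?_⟩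
  intro Θ hΘ hΘmin i j hij
  rw [hunique Θ hΘ hΘmin]
  exact diagonal_apply_ne _ hij

/-- If `λ > u_λ = max_{i≠j} |Sᵢⱼ|`, then the diagonal matrix with diagonal
entries `1/Sᵢᵢ` is the unique minimizer of the graphical lasso objective over
positive definite symmetric matrices; in particular every minimizer has all
off-diagonal entries zero, i.e. the estimated graph is empty. -/
theorem glasso_empty_graph {n : ℕ} (hn : 2 ≤ n)
    (S : Matrix (Fin n) (Fin n) ℝ) (hSsym : S.IsSymm)
    (hSdiag : ∀ i, 0 < S i i) (lam ulam : ℝ)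
    (hulam : IsGreatest {x : ℝ | ∃ i j : Fin n, i ≠ j ∧ x = |S i j|} ulam)
    (hlam : ulam < lam) :
    (Matrix.diagonal fun i => 1 / S i i).PosDef ∧
    IsMinOn (glassoObj S lam) {Θ : Matrix (Fin n) (Fin n) ℝ | Θ.PosDef}
      (Matrix.diagonal fun i => 1 / S i i) ∧
    (∀ Θ : Matrix (Fin n) (Fin n) ℝ, Θ.PosDef →
      IsMinOn (glassoObj S lam) {Θ' : Matrix (Fin n) (Fin n) ℝ | Θ'.PosDef} Θ →
      Θ = Matrix.diagonal fun i => 1 / S i i) ∧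
    (∀ Θ : Matrix (Fin n) (Fin n) ℝ, Θ.PosDef →
      IsMinOn (glassoObj S lam) {Θ' : Matrix (Fin n) (Fin n) ℝ | Θ'.PosDef} Θ →
      ∀ i j, i ≠ j → Θ i j = 0) :=
  glasso_empty_graph_general S hSdiag lam ulam hulam hlam
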